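/- Let d = 2 and m ≥ 1. Let q ∈ ℝ^m have positive integer entries, n = q_1 + ⋯ + q_m, and let Q̃ ∈ ℝ^{n×n} be the block-diagonal matrix with blocks q_i·I_{q_i}. Given X ∈ ℝ^{2×m} with unit-norm columns, let X̃ ∈ ℝ^{2×n} repeat column x_i exactly q_i times. Define M ∈ ℝ^{m×m} by m_ij = q_i q_j h(x_iᵀx_j) with h(t) = tφ'(t) − (1−t²)φ''(t), D = diag(M1_m), and define M̃ ∈ ℝ^{n×n} by m̃_kl = h(x̃_kᵀx̃_l). If X is critical for f_m(X) = (1/2)⟨qqᵀ, φ(XᵀX)⟩, then X̃ is critical for f_n(X̃) = (1/2)⟨1_n 1_nᵀ, φ(X̃ᵀX̃)⟩, and the eigenvalues of Q̃^{1/2} L(M̃) Q̃^{1/2} (with multiplicity) consist of: the m eigenvalues of L(M), together with, for each i = 1,…,m, the value d_ii with multiplicity q_i − 1. -/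

import Mathlib

open Matrix

noncomputable section

/-- Frobenius inner product `⟨A,B⟩ = ∑ᵢⱼ Aᵢⱼ Bᵢⱼ`. -/
def frob {ι κ : Type*} [Fintype ι] [Fintype κ] (A B : Matrix ι κ ℝ) : ℝ :=
  ∑ i, ∑ j, A i j * B i j

/-- `ddiag` zeroes out all off-diagonal entries of a square matrix. -/
def ddiag {ι : Type*} [Fintype ι] [DecidableEq ι] (M : Matrix ι ι ℝ) : Matrix ι ι ℝ :=
  Matrix.diagonal fun i => M i i

/-- Graph Laplacian `L(M) = diag(M 1) − M`. -/
def lap {ι : Type*} [Fintype ι] [DecidableEq ι] (M : Matrix ι ι ℝ) : Matrix ι ι ℝ :=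
  Matrix.diagonal (fun i => ∑ j, M i j) - M

/-- `X` has unit-norm columns. -/
def unitCols {d : ℕ} {ι : Type*} [Fintype ι] (X : Matrix (Fin d) ι ℝ) : Prop :=
  ∀ j, ∑ i, X i j ^ 2 = 1

/-- `A = W ⊙ φ'(XᵀX)` (`d1` playing the role of `φ'`). -/
def Amat {d : ℕ} {ι : Type*} [Fintype ι] (W : Matrix ι ι ℝ) (X : Matrix (Fin d) ι ℝ)
    (d1 : ℝ → ℝ) : Matrix ι ι ℝ :=
  Matrix.hadamard W ((Xᵀ * X).map d1)

/-- `S = ddiag(XᵀXA) − A`. -/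
def Smat {d : ℕ} {ι : Type*} [Fintype ι] [DecidableEq ι] (W : Matrix ι ι ℝ)
    (X : Matrix (Fin d) ι ℝ) (d1 : ℝ → ℝ) : Matrix ι ι ℝ :=
  ddiag ((Xᵀ * X) * Amat W X d1) - Amat W X d1

/-- First-order criticality: `X S = 0`, i.e. `X·ddiag(XᵀXA) = XA`
(vanishing Riemannian gradient on the product of spheres). -/
def IsCritical {d : ℕ} {ι : Type*} [Fintype ι] [DecidableEq ι] (W : Matrix ι ι ℝ)
    (X : Matrix (Fin d) ι ℝ) (d1 : ℝ → ℝ) : Prop :=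
  X * Smat W X d1 = 0

/-- The Riemannian Hessian quadratic form of `f` at `X` is negative semidefinite:
`−⟨ẊᵀẊ, S⟩ + (1/2)⟨(XᵀẊ + ẊᵀX)^{⊙2}, W ⊙ φ''(XᵀX)⟩ ≤ 0` for all tangent `Ẋ`. -/
def HessNegSemidef {d : ℕ} {ι : Type*} [Fintype ι] [DecidableEq ι] (W : Matrix ι ι ℝ)
    (X : Matrix (Fin d) ι ℝ) (d1 d2 : ℝ → ℝ) : Prop :=
  ∀ V : Matrix (Fin d) ι ℝ, (∀ j, (Xᵀ * V) j j = 0) →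
    -(frob (Vᵀ * V) (Smat W X d1))
      + (1 / 2) * frob ((Xᵀ * V + Vᵀ * X).map fun t => t ^ 2)
          (Matrix.hadamard W ((Xᵀ * X).map d2)) ≤ 0

/-- The graph with an edge `{i,j}` whenever `w_ij > 0` is connected. -/
def ConnectedW {ι : Type*} (W : Matrix ι ι ℝ) : Prop :=
  (SimpleGraph.fromRel fun i j => 0 < W i j).Connected

/-- `f(Y) = (1/2)⟨W, φ(YᵀY)⟩`. -/
def fval {d : ℕ} {ι : Type*} [Fintype ι] (W : Matrix ι ι ℝ) (φ : ℝ → ℝ)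
    (Y : Matrix (Fin d) ι ℝ) : ℝ :=
  (1 / 2) * frob W ((Yᵀ * Y).map φ)

/-- `h(t) = tφ'(t) − (1−t²)φ''(t)`. -/
def hfun (d1 d2 : ℝ → ℝ) (t : ℝ) : ℝ := t * d1 t - (1 - t ^ 2) * d2 t

/-- The matrix `M` with `m_ij = w_ij · h(x_iᵀx_j)`. -/
def Mmat {d : ℕ} {ι : Type*} [Fintype ι] (W : Matrix ι ι ℝ) (X : Matrix (Fin d) ι ℝ)
    (d1 d2 : ℝ → ℝ) : Matrix ι ι ℝ :=
  Matrix.of fun i j => W i j * hfun d1 d2 ((Xᵀ * X) i j)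

/-- The kernel of `L` is exactly `span(1)`. -/
def KernelIsConst {ι : Type*} [Fintype ι] [DecidableEq ι] (L : Matrix ι ι ℝ) : Prop :=
  ∀ α : ι → ℝ, L.mulVec α = 0 ↔ ∃ c : ℝ, ∀ k, α k = c

/-- The regular `n`-gon configuration on the unit circle. -/
def ngon (n : ℕ) : Matrix (Fin 2) (Fin n) ℝ :=
  Matrix.of fun a j =>
    if a = 0 then Real.cos (2 * Real.pi * (j : ℝ) / (n : ℝ))
    else Real.sin (2 * Real.pi * (j : ℝ) / (n : ℝ))

/-- The log-sum-exp smoothing `φ_{ε,τ}(t) = ε·log(1 + e^{(t−τ)/ε})` of the ReLU. -/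
def philse (ε τ : ℝ) : ℝ → ℝ := fun t => ε * Real.log (1 + Real.exp ((t - τ) / ε))


/-!
Write the repeated configuration as `X̃ = X ∘ π` for the map `π` sending each copy to its
original point, so that the fibre of `i` has `q i` elements, and fix a base point `s i` in each
fibre. With unit weights, the column of `X̃ S̃` at a copy of `x_i` is `1 / q_i` times the `i`-th
column of `X S` for the weights `qqᵀ`, which transfers criticality.

The matrix `B = Q̃^{1/2} L(M̃) Q̃^{1/2}` equals `diag(d ∘ π) - R̃` with `R̃` constant on pairs of
fibres. The normalized fibre indicators span a `B`-invariant subspace on which `B` acts as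
`L(M)`, and for every non-base point `k` the row vector `e_k - e_{s(π k)}` kills `R̃`, hence is
a left eigenvector of `B` with eigenvalue `d_{π k}`. In the basis made of the fibre indicators
and the non-base coordinate vectors, `B` is therefore block upper triangular with diagonal
blocks `L(M)` and `diag(d_{π k})`.
-/

open Matrix Polynomial Finset

theorem Matrix.charpoly_mul_mul_of_mul_eq_one {R n n' : Type*} [CommRing R]
    [Fintype n] [DecidableEq n] [Fintype n'] [DecidableEq n'] (e : n ≃ n')
    {P : Matrix n n' R} {S : Matrix n' n R} (hSP : S * P = 1) (B : Matrix n n R) :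
    (S * B * P).charpoly = B.charpoly := by
  have hPS : P * S = 1 := (mul_eq_one_comm_of_equiv e).2 hSP
  have h := charpoly_mul_comm' S (B * P)
  rw [Matrix.mul_assoc B P S, hPS, Matrix.mul_one, ← Matrix.mul_assoc,
    Fintype.card_congr e] at h
  exact (isRegular_X_pow _).left h

theorem card_filter_sigma_fst {ι : Type*} [Fintype ι] [DecidableEq ι] {β : ι → Type*}
    [∀ i, Fintype (β i)] (i : ι) : #{k : Σ i, β i | k.1 = i} = Fintype.card (β i) := by
  rw [card_filter, Fintype.sum_sigma]
  simp [apply_ite]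

theorem gram_submatrix {ι n : Type*} {d : ℕ} (X : Matrix (Fin d) ι ℝ) (π : n → ι) :
    (X.submatrix id π)ᵀ * X.submatrix id π = (Xᵀ * X).submatrix π π := by
  rw [transpose_submatrix, submatrix_mul _ _ _ _ _ Function.bijective_id]

theorem mul_Smat_apply {ι : Type*} [Fintype ι] [DecidableEq ι] {d : ℕ} (W : Matrix ι ι ℝ)
    (Y : Matrix (Fin d) ι ℝ) (d1 : ℝ → ℝ) (a : Fin d) (j : ι) :
    (Y * Smat W Y d1) a j
      = Y a j * ∑ i, (Yᵀ * Y) j i * (W i j * d1 ((Yᵀ * Y) i j))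
        - ∑ i, Y a i * (W i j * d1 ((Yᵀ * Y) i j)) := by
  simp [Smat, ddiag, Amat, mul_apply, mul_sub, sum_sub_distrib, diagonal_apply]

section Fibers

variable {ι n : Type*} [DecidableEq ι] [Fintype n] {π : n → ι} {q : ι → ℕ}

theorem card_fiber_pos (hq : ∀ i, #{k | π k = i} = q i) (k : n) : 0 < q (π k) :=
  hq (π k) ▸ card_pos.2 ⟨k, by simp⟩

theorem pos_of_section {s : ι → n} (hs : ∀ i, π (s i) = i) (hq : ∀ i, #{k | π k = i} = q i)
    (i : ι) : 0 < q i := by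
  simpa [hs] using card_fiber_pos hq (s i)

variable [Fintype ι]

theorem sum_comp_eq_sum_card_mul (hq : ∀ i, #{k | π k = i} = q i) (f : ι → ℝ) :
    ∑ k, f (π k) = ∑ i, (q i : ℝ) * f i := by
  rw [← Finset.sum_fiberwise' univ π f]
  simp [hq]

variable [DecidableEq n]

theorem mul_Smat_submatrix_apply (hq : ∀ i, #{k | π k = i} = q i) {d : ℕ}
    (W : Matrix ι ι ℝ) (X : Matrix (Fin d) ι ℝ) (d1 : ℝ → ℝ) (a : Fin d) (l : n) :
    (q (π l) : ℝ) * (X.submatrix id π * Smat (W.submatrix π π) (X.submatrix id π) d1) a l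
      = (X * Smat (of fun i j => (q i : ℝ) * q j * W i j) X d1) a (π l) := by
  rw [mul_Smat_apply, mul_Smat_apply, gram_submatrix]
  simp only [submatrix_apply, id, of_apply]
  rw [sum_comp_eq_sum_card_mul hq
      (fun i => (Xᵀ * X) (π l) i * (W i (π l) * d1 ((Xᵀ * X) i (π l)))),
    sum_comp_eq_sum_card_mul hq (fun i => X a i * (W i (π l) * d1 ((Xᵀ * X) i (π l))))]
  simp only [mul_sub, mul_sum]
  congr 1 <;> exact sum_congr rfl fun i _ => by ring

theorem IsCritical.submatrix (hq : ∀ i, #{k | π k = i} = q i) {d : ℕ}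
    {W : Matrix ι ι ℝ} {X : Matrix (Fin d) ι ℝ} {d1 : ℝ → ℝ}
    (h : IsCritical (of fun i j => (q i : ℝ) * q j * W i j) X d1) :
    IsCritical (W.submatrix π π) (X.submatrix id π) d1 := by
  ext a l
  have hl := mul_Smat_submatrix_apply hq W X d1 a l
  rw [h, Matrix.zero_apply, mul_eq_zero] at hl
  exact hl.resolve_left (by exact_mod_cast (card_fiber_pos hq l).ne')

end Fibers

section Blowup

variable {ι n : Type*} {π : n → ι} {s : ι → n} {q : ι → ℕ}

theorem base_ne_nonBase (hs : ∀ i, π (s i) = i) (i : ι) (k' : {k // k ≠ s (π k)}) :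
    s i ≠ k' := fun h => k'.2 (by rw [← h, hs])

variable [Fintype n] [DecidableEq n]

def nonBaseIncl (π : n → ι) (s : ι → n) : Matrix n {k // k ≠ s (π k)} ℝ :=
  (1 : Matrix n n ℝ).submatrix id Subtype.val

def nonBaseCoord (π : n → ι) (s : ι → n) : Matrix {k // k ≠ s (π k)} n ℝ :=
  of fun k' k => (if k'.1 = k then 1 else 0) - (if s (π k'.1) = k then 1 else 0)

def baseCoord (s : ι → n) (q : ι → ℕ) : Matrix ι n ℝ :=
  of fun j k => if s j = k then √(q j) else 0

def sumNonBaseEquiv (hs : ∀ i, π (s i) = i) : ι ⊕ {k // k ≠ s (π k)} ≃ n :=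
  (Equiv.sumCongr
    { toFun := fun i => ⟨s i, by rw [hs]⟩
      invFun := fun k => π k.1
      left_inv := fun i => hs i
      right_inv := fun k => Subtype.ext k.2.symm }
    (Equiv.refl _)).trans (Equiv.sumCompl fun k => k = s (π k))

theorem nonBaseCoord_mul_nonBaseIncl (hs : ∀ i, π (s i) = i) :
    nonBaseCoord π s * nonBaseIncl π s = 1 := by
  ext k' l'
  simp [nonBaseCoord, nonBaseIncl, mul_apply, one_apply, base_ne_nonBase hs, Subtype.ext_iff]

theorem baseCoord_mul_nonBaseIncl (hs : ∀ i, π (s i) = i) :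
    baseCoord s q * nonBaseIncl π s = 0 := by
  ext i k'
  simp [baseCoord, nonBaseIncl, mul_apply, one_apply, base_ne_nonBase hs]

theorem nonBaseCoord_mul_diagonal_sub_submatrix (hs : ∀ i, π (s i) = i) (d : ι → ℝ)
    (R : Matrix ι ι ℝ) :
    nonBaseCoord π s * (diagonal (fun k => d (π k)) - R.submatrix π π)
      = diagonal (fun k' : {k // k ≠ s (π k)} => d (π k')) * nonBaseCoord π s := by
  ext k' l
  simp only [mul_apply, nonBaseCoord, of_apply, Matrix.sub_apply, mul_sub, sub_mul,
    sum_sub_distrib, ite_mul, one_mul, zero_mul, sum_ite_eq, mem_univ, if_true, diagonal_apply,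
    submatrix_apply, hs]
  simp [mul_ite]

variable [DecidableEq ι]

def fiberIndicator (π : n → ι) (q : ι → ℕ) : Matrix n ι ℝ :=
  of fun k j => if π k = j then (√(q j))⁻¹ else 0

theorem nonBaseCoord_mul_fiberIndicator (hs : ∀ i, π (s i) = i) :
    nonBaseCoord π s * fiberIndicator π q = 0 := by
  ext k' j
  simp only [nonBaseCoord, fiberIndicator, mul_apply, of_apply, sub_mul, ite_mul, one_mul,
    zero_mul, sum_sub_distrib, sum_ite_eq, mem_univ, if_true, hs, sub_self, Matrix.zero_apply]

theorem baseCoord_mul_fiberIndicator (hs : ∀ i, π (s i) = i)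
    (hq : ∀ i, #{k | π k = i} = q i) : baseCoord s q * fiberIndicator π q = 1 := by
  ext i j
  have hi : (√(q i) : ℝ) ≠ 0 := by have := pos_of_section hs hq i; positivity
  simp only [baseCoord, fiberIndicator, mul_apply, of_apply, ite_mul, zero_mul]
  simp only [sum_ite_eq, mem_univ, if_true, hs, one_apply]
  split_ifs with hij
  · subst hij; exact mul_inv_cancel₀ hi
  · exact mul_zero _

variable [Fintype ι]

theorem prod_nonBase {M : Type*} [CommMonoid M] (hs : ∀ i, π (s i) = i)
    (hq : ∀ i, #{k | π k = i} = q i) (f : ι → M) :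
    ∏ k : {k // k ≠ s (π k)}, f (π k) = ∏ i, f i ^ (q i - 1) := by
  rw [← Finset.prod_subtype {k | k ≠ s (π k)} (by simp) (fun k => f (π k)),
    ← Finset.prod_fiberwise' _ π f]
  refine prod_congr rfl fun i _ => ?_
  rw [prod_const, ← hq i, ← card_erase_of_mem (s := {k | π k = i}) (a := s i) (by simp [hs])]
  congr 2
  ext k
  simp only [mem_filter, mem_univ, true_and, mem_erase]
  constructor <;> rintro ⟨hk, rfl⟩ <;> exact ⟨hk, rfl⟩

theorem sqrt_mul_lap_submatrix_mul_sqrt (hq : ∀ i, #{k | π k = i} = q i)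
    (K : Matrix ι ι ℝ) :
    diagonal (fun k => √(q (π k))) * lap (K.submatrix π π) * diagonal (fun k => √(q (π k)))
      = diagonal (fun k => ∑ j, (q (π k) : ℝ) * q j * K (π k) j)
        - (of fun i j => √(q i) * √(q j) * K i j).submatrix π π := by
  ext k l
  simp only [lap, diagonal_mul, mul_diagonal, Matrix.sub_apply, diagonal_apply, submatrix_apply,
    of_apply, sum_comp_eq_sum_card_mul hq (K (π k))]
  split_ifs with hkl
  · subst hkl
    rw [show ∑ j, (q (π k) : ℝ) * q j * K (π k) j = q (π k) * ∑ j, (q j : ℝ) * K (π k) j by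
      simp only [mul_sum, mul_assoc]]
    linear_combination
      (∑ j, (q j : ℝ) * K (π k) j) * Real.mul_self_sqrt (Nat.cast_nonneg (q (π k)))
  · ring

theorem diagonal_sub_submatrix_mul_fiberIndicator (hs : ∀ i, π (s i) = i)
    (hq : ∀ i, #{k | π k = i} = q i) (K : Matrix ι ι ℝ) :
    (diagonal (fun k => ∑ j, (q (π k) : ℝ) * q j * K (π k) j)
        - (of fun i j => √(q i) * √(q j) * K i j).submatrix π π) * fiberIndicator π q
      = fiberIndicator π q * lap (of fun i j => (q i : ℝ) * q j * K i j) := by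
  ext k j
  have hsq : ∀ i, √(q i : ℝ) * √(q i) = q i := fun i => Real.mul_self_sqrt (Nat.cast_nonneg _)
  have hne : ∀ i, √(q i : ℝ) ≠ 0 := fun i => by have := pos_of_section hs hq i; positivity
  rw [Matrix.sub_mul, Matrix.sub_apply, diagonal_mul, mul_apply, mul_apply]
  simp only [fiberIndicator, lap, of_apply, submatrix_apply]
  rw [sum_comp_eq_sum_card_mul hq
    (fun i => √(q (π k)) * √(q i) * K (π k) i * if i = j then (√(q j))⁻¹ else 0)]
  simp only [mul_ite, mul_zero, ite_mul, zero_mul, sum_ite_eq', sum_ite_eq, mem_univ, if_true,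
    Matrix.sub_apply, diagonal_apply, of_apply]
  split_ifs with h
  · subst h
    field_simp
    rw [Real.sq_sqrt (Nat.cast_nonneg _)]
    ring
  · have := hne j
    have := hne (π k)
    field_simp
    linear_combination (-(q j : ℝ) * K (π k) j) * hsq (π k)

theorem charpoly_sqrt_mul_lap_submatrix_mul_sqrt (hs : ∀ i, π (s i) = i)
    (hq : ∀ i, #{k | π k = i} = q i) (K : Matrix ι ι ℝ) :
    (diagonal (fun k => √(q (π k))) * lap (K.submatrix π π) *
        diagonal (fun k => √(q (π k)))).charpoly
      = (lap (of fun i j => (q i : ℝ) * q j * K i j)).charpoly *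
        ∏ i, (X - C (∑ j, (q i : ℝ) * q j * K i j)) ^ (q i - 1) := by
  have hSP : fromRows (baseCoord s q) (nonBaseCoord π s) *
      fromCols (fiberIndicator π q) (nonBaseIncl π s) = 1 := by
    rw [fromRows_mul_fromCols, baseCoord_mul_fiberIndicator hs hq, baseCoord_mul_nonBaseIncl hs,
      nonBaseCoord_mul_fiberIndicator hs, nonBaseCoord_mul_nonBaseIncl hs, fromBlocks_one]
  rw [sqrt_mul_lap_submatrix_mul_sqrt hq,
    ← charpoly_mul_mul_of_mul_eq_one (sumNonBaseEquiv hs).symm hSP, fromRows_mul,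
    fromRows_mul_fromCols]
  rw [Matrix.mul_assoc (baseCoord s q), diagonal_sub_submatrix_mul_fiberIndicator hs hq,
    ← Matrix.mul_assoc, baseCoord_mul_fiberIndicator hs hq, Matrix.one_mul,
    nonBaseCoord_mul_diagonal_sub_submatrix hs fun i => ∑ j, (q i : ℝ) * q j * K i j,
    Matrix.mul_assoc _ (nonBaseCoord π s), nonBaseCoord_mul_fiberIndicator hs, Matrix.mul_zero,
    Matrix.mul_assoc _ (nonBaseCoord π s), nonBaseCoord_mul_nonBaseIncl hs, Matrix.mul_one]
  rw [charpoly_fromBlocks_zero₂₁, charpoly_diagonal,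
    prod_nonBase hs hq fun i => X - C (∑ j, (q i : ℝ) * q j * K i j)]

end Blowup

theorem repeating_points_eigenvalues_general
    {m : ℕ}
    (d1 d2 : ℝ → ℝ)
    (q : Fin m → ℕ) (hq : ∀ i, 1 ≤ q i)
    (X : Matrix (Fin 2) (Fin m) ℝ)
    (hcrit : IsCritical (Matrix.of fun i j => (q i : ℝ) * (q j : ℝ)) X d1) :
    IsCritical (Matrix.of fun _ _ => (1 : ℝ))
      (Matrix.of fun a (k : (i : Fin m) × Fin (q i)) => X a k.1) d1 ∧
    (Matrix.diagonal (fun k : (i : Fin m) × Fin (q i) => Real.sqrt (q k.1)) *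
        lap (Mmat (Matrix.of fun _ _ => (1 : ℝ))
          (Matrix.of fun a (k : (i : Fin m) × Fin (q i)) => X a k.1) d1 d2) *
        Matrix.diagonal (fun k : (i : Fin m) × Fin (q i) => Real.sqrt (q k.1))).charpoly
      = (lap (Mmat (Matrix.of fun i j => (q i : ℝ) * (q j : ℝ)) X d1 d2)).charpoly *
        ∏ i : Fin m,
          (Polynomial.X - Polynomial.C
            (∑ j, Mmat (Matrix.of fun i' j' => (q i' : ℝ) * (q j' : ℝ)) X d1 d2 i j))
            ^ (q i - 1) := by
  have hfib : ∀ i, #{k : (i : Fin m) × Fin (q i) | k.1 = i} = q i := fun i => by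
    rw [card_filter_sigma_fst, Fintype.card_fin]
  refine ⟨IsCritical.submatrix hfib (W := of fun _ _ => (1 : ℝ)) (by simpa using hcrit), ?_⟩
  have hM : Mmat (of fun _ _ => (1 : ℝ)) (of fun a (k : (i : Fin m) × Fin (q i)) => X a k.1) d1 d2
      = (of fun i j => hfun d1 d2 ((Xᵀ * X) i j)).submatrix Sigma.fst Sigma.fst := by
    ext k l
    simp [Mmat, mul_apply]
  rw [hM]
  exact charpoly_sqrt_mul_lap_submatrix_mul_sqrt (s := fun i => ⟨i, 0, hq i⟩) (fun _ => rfl) hfib _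

/-- Lemma 7, refinement: criticality transfers from `X` (weights `qqᵀ`) to
the repeated configuration `X̃` (unit weights), and the characteristic polynomial of
`Q̃^{1/2} L(M̃) Q̃^{1/2}` is that of `L(M)` times `∏ᵢ (X − d_ii)^{q_i − 1}`. -/
theorem repeating_points_eigenvalues
    {m : ℕ} (hm : 1 ≤ m)
    (φ d1 d2 : ℝ → ℝ)
    (hder1 : ∀ t ∈ Set.Icc (-1 : ℝ) 1, HasDerivAt φ (d1 t) t)
    (hder2 : ∀ t ∈ Set.Icc (-1 : ℝ) 1, HasDerivAt d1 (d2 t) t)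
    (q : Fin m → ℕ) (hq : ∀ i, 1 ≤ q i)
    (X : Matrix (Fin 2) (Fin m) ℝ) (hX : unitCols X)
    (hcrit : IsCritical (Matrix.of fun i j => (q i : ℝ) * (q j : ℝ)) X d1) :
    IsCritical (Matrix.of fun _ _ => (1 : ℝ))
      (Matrix.of fun a (k : (i : Fin m) × Fin (q i)) => X a k.1) d1 ∧
    (Matrix.diagonal (fun k : (i : Fin m) × Fin (q i) => Real.sqrt (q k.1)) *
        lap (Mmat (Matrix.of fun _ _ => (1 : ℝ))
          (Matrix.of fun a (k : (i : Fin m) × Fin (q i)) => X a k.1) d1 d2) *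
        Matrix.diagonal (fun k : (i : Fin m) × Fin (q i) => Real.sqrt (q k.1))).charpoly
      = (lap (Mmat (Matrix.of fun i j => (q i : ℝ) * (q j : ℝ)) X d1 d2)).charpoly *
        ∏ i : Fin m,
          (Polynomial.X - Polynomial.C
            (∑ j, Mmat (Matrix.of fun i' j' => (q i' : ℝ) * (q j' : ℝ)) X d1 d2 i j))
            ^ (q i - 1) :=
  repeating_points_eigenvalues_general d1 d2 q hq X hcrit
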